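/- Let G be a finite simple graph having a vertex v of degree at least 4 such that all neighbors of v except exactly one are leaves (vertices of degree 1), and the remaining neighbor has degree at least 2. Then b_dR(G) = 1. -/

import Mathlib

/-- A double Roman dominating function (DRDF) on a graph `G`: a function
`f : V → ℕ` taking values in `{0,1,2,3}` such that every vertex assigned `0`
has a neighbor assigned `3` or two distinct neighbors assigned `2`, and every
vertex assigned `1` has a neighbor assigned at least `2`. -/
def IsDRDF {V : Type*} (G : SimpleGraph V) (f : V → ℕ) : Prop :=
  (∀ v, f v ≤ 3) ∧
  (∀ v, f v = 0 →
    (∃ w, G.Adj v w ∧ f w = 3) ∨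
    (∃ w₁ w₂, G.Adj v w₁ ∧ G.Adj v w₂ ∧ w₁ ≠ w₂ ∧ f w₁ = 2 ∧ f w₂ = 2)) ∧
  (∀ v, f v = 1 → ∃ w, G.Adj v w ∧ 2 ≤ f w)

/-- The double Roman domination number `γ_dR(G)`: the minimum weight of a DRDF on `G`. -/
noncomputable def gammaDR {V : Type*} [Fintype V] (G : SimpleGraph V) : ℕ :=
  sInf {k | ∃ f : V → ℕ, IsDRDF G f ∧ ∑ v, f v = k}

/-- The double Roman bondage number `b_dR(G)`: the minimum cardinality of a set
`B` of edges of `G` such that `γ_dR(G - B) > γ_dR(G)`. -/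
noncomputable def bDR {V : Type*} [Fintype V] (G : SimpleGraph V) : ℕ :=
  sInf {k | ∃ B : Finset (Sym2 V), ↑B ⊆ G.edgeSet ∧ B.card = k ∧
    gammaDR G < gammaDR (G.deleteEdges ↑B)}

/-! Pick two leaves `a ≠ b` at `v` other than `u` and delete the edge `va`. A minimum DRDF `f` of
`G - va` gives the isolated vertex `a` at least `2`, and `f v + f b ≥ 2` because `b` hangs at `v`.
Assigning `3` to `v` and `0` to `a` and `b` yields a DRDF of `G` of weight at most `w(f) - 1`,
so `γ_dR(G) < γ_dR(G - va)`. -/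

namespace IsDRDF

variable {V : Type*} {G : SimpleGraph V} {f : V → ℕ}

theorem mono {H : SimpleGraph V} (hf : IsDRDF H f) (hHG : H ≤ G) : IsDRDF G f := by
  obtain ⟨h3, h0, h1⟩ := hf
  refine ⟨h3, fun x hx => ?_, fun x hx => ?_⟩
  · rcases h0 x hx with ⟨w, hw, hw3⟩ | ⟨w₁, w₂, hw₁, hw₂, hne, h₁, h₂⟩
    · exact .inl ⟨w, hHG hw, hw3⟩
    · exact .inr ⟨w₁, w₂, hHG hw₁, hHG hw₂, hne, h₁, h₂⟩
  · obtain ⟨w, hw, hw2⟩ := h1 x hx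
    exact ⟨w, hHG hw, hw2⟩

theorem of_le {g : V → ℕ} (hf : IsDRDF G f) (hfg : ∀ x, f x ≤ g x) (hg : ∀ x, g x ≤ 3) :
    IsDRDF G g := by
  obtain ⟨-, h0, h1⟩ := hf
  refine ⟨hg, fun x hx => ?_, fun x hx => ?_⟩
  · have hfx : f x = 0 := by have := hfg x; omega
    rcases h0 x hfx with ⟨w, hw, hw3⟩ | ⟨w₁, w₂, hw₁, hw₂, hne, h₁, h₂⟩
    · exact .inl ⟨w, hw, by have := hfg w; have := hg w; omega⟩
    · by_cases hg₁ : g w₁ = 3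
      · exact .inl ⟨w₁, hw₁, hg₁⟩
      by_cases hg₂ : g w₂ = 3
      · exact .inl ⟨w₂, hw₂, hg₂⟩
      have := hfg w₁; have := hfg w₂; have := hg w₁; have := hg w₂
      exact .inr ⟨w₁, w₂, hw₁, hw₂, hne, by omega, by omega⟩
  · have hfx : f x = 0 ∨ f x = 1 := by have := hfg x; omega
    rcases hfx with hfx | hfx
    · rcases h0 x hfx with ⟨w, hw, hw3⟩ | ⟨w, -, hw, -, -, hw2, -⟩
      · exact ⟨w, hw, by have := hfg w; omega⟩
      · exact ⟨w, hw, by have := hfg w; omega⟩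
    · obtain ⟨w, hw, hw2⟩ := h1 x hfx
      exact ⟨w, hw, hw2.trans (hfg w)⟩

theorem zero_on_leaves [DecidableEq V] {v : V} {L : Finset V} (hf : IsDRDF G f) (hv : f v = 3)
    (hL : ∀ w ∈ L, ∀ x, G.Adj w x ↔ x = v) :
    IsDRDF G (fun x => if x ∈ L then 0 else f x) := by
  obtain ⟨h3, h0, h1⟩ := hf
  set g : V → ℕ := fun x => if x ∈ L then 0 else f x
  have hgL : ∀ x ∈ L, g x = 0 := fun x hx => if_pos hx
  have hg : ∀ x ∉ L, g x = f x := fun x hx => if_neg hx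
  have hvL : v ∉ L := fun h => G.irrefl ((hL v h v).2 rfl)
  have hadj : ∀ x w, x ≠ v → G.Adj x w → g w = f w :=
    fun x w hxv hxw => hg w fun hw => hxv ((hL w hw x).1 hxw.symm)
  refine ⟨fun x => ?_, fun x hx => ?_, fun x hx => ?_⟩
  · by_cases hx : x ∈ L
    · simp [hgL x hx]
    · exact (hg x hx).trans_le (h3 x)
  · by_cases hxL : x ∈ L
    · exact .inl ⟨v, (hL x hxL v).2 rfl, (hg v hvL).trans hv⟩
    have hxv : x ≠ v := by rintro rfl; rw [hg x hxL, hv] at hx; omega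
    rw [hg x hxL] at hx
    rcases h0 x hx with ⟨w, hw, hw3⟩ | ⟨w₁, w₂, hw₁, hw₂, hne, h₁, h₂⟩
    · exact .inl ⟨w, hw, (hadj x w hxv hw).trans hw3⟩
    · exact .inr ⟨w₁, w₂, hw₁, hw₂, hne, (hadj x w₁ hxv hw₁).trans h₁,
        (hadj x w₂ hxv hw₂).trans h₂⟩
  · have hxL : x ∉ L := fun h => by rw [hgL x h] at hx; omega
    have hxv : x ≠ v := by rintro rfl; rw [hg x hxL, hv] at hx; omega
    rw [hg x hxL] at hx
    obtain ⟨w, hw, hw2⟩ := h1 x hx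
    exact ⟨w, hw, (hadj x w hxv hw).symm ▸ hw2⟩

theorem two_le_of_isolated {w : V} (hf : IsDRDF G f) (hw : ∀ x, ¬G.Adj w x) : 2 ≤ f w := by
  obtain ⟨-, h0, h1⟩ := hf
  by_contra! h
  interval_cases hfw : f w
  · rcases h0 w hfw with ⟨x, hx, -⟩ | ⟨x, -, hx, -⟩ <;> exact hw x hx
  · obtain ⟨x, hx, -⟩ := h1 w hfw
    exact hw x hx

theorem two_le_add_of_adj_imp_eq {v w : V} (hf : IsDRDF G f) (hw : ∀ x, G.Adj w x → x = v) :
    2 ≤ f v + f w := by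
  obtain ⟨-, h0, h1⟩ := hf
  by_contra! h
  have hfw : f w = 0 ∨ f w = 1 := by omega
  rcases hfw with hfw | hfw
  · rcases h0 w hfw with ⟨x, hx, hx3⟩ | ⟨x₁, x₂, hx₁, hx₂, hne, -⟩
    · rw [hw x hx] at hx3; omega
    · exact hne ((hw x₁ hx₁).trans (hw x₂ hx₂).symm)
  · obtain ⟨x, hx, hx2⟩ := h1 w hfw
    rw [hw x hx] at hx2; omega

end IsDRDF

section

variable {V : Type*} [Fintype V]

theorem exists_isDRDF_sum_eq_gammaDR (G : SimpleGraph V) :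
    ∃ f : V → ℕ, IsDRDF G f ∧ ∑ x, f x = gammaDR G :=
  Nat.sInf_mem (s := {k | ∃ f : V → ℕ, IsDRDF G f ∧ ∑ v, f v = k})
    ⟨_, fun _ => 3, ⟨fun _ => le_rfl, by simp, by simp⟩, rfl⟩

theorem gammaDR_le_sum {G : SimpleGraph V} {f : V → ℕ} (hf : IsDRDF G f) :
    gammaDR G ≤ ∑ x, f x :=
  Nat.sInf_le ⟨f, hf, rfl⟩

theorem sum_ite_mem_zero_add_sum [DecidableEq V] (L : Finset V) (f : V → ℕ) :
    ∑ x, (if x ∈ L then 0 else f x) + ∑ x ∈ L, f x = ∑ x, f x := by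
  rw [Finset.sum_ite, Finset.sum_const_zero, zero_add, Finset.filter_not,
    Finset.filter_mem_eq_inter, Finset.univ_inter, ← Finset.compl_eq_univ_sdiff, add_comm,
    Finset.sum_add_sum_compl]

theorem gammaDR_lt_gammaDR_deleteEdges_of_leaves {G : SimpleGraph V} {v a b : V} (hab : a ≠ b)
    (ha : ∀ x, G.Adj a x ↔ x = v) (hb : ∀ x, G.Adj b x ↔ x = v) :
    gammaDR G < gammaDR (G.deleteEdges {s(v, a)}) := by
  classical
  obtain ⟨f, hf, hsum⟩ := exists_isDRDF_sum_eq_gammaDR (G.deleteEdges {s(v, a)})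
  have hfa : 2 ≤ f a := hf.two_le_of_isolated fun x hx => by
    obtain ⟨hax, hne⟩ := (SimpleGraph.deleteEdges_adj ..).1 hx
    rw [(ha x).1 hax] at hne
    exact hne (Sym2.eq_swap ▸ rfl)
  have hfb : 2 ≤ f v + f b := hf.two_le_add_of_adj_imp_eq fun x hx =>
    (hb x).1 (SimpleGraph.deleteEdges_le _ hx)
  have hva : v ≠ a := by rintro rfl; exact G.irrefl ((ha _).2 rfl)
  have hvb : v ≠ b := by rintro rfl; exact G.irrefl ((hb _).2 rfl)
  set g := Function.update f v 3
  have hg : IsDRDF G fun x => if x ∈ ({a, b} : Finset V) then 0 else g x := by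
    have hfG : IsDRDF G f := hf.mono (SimpleGraph.deleteEdges_le _)
    refine (hfG.of_le (fun x => ?_) (fun x => ?_)).zero_on_leaves (Function.update_self ..)
      (by simpa [or_imp, forall_and] using ⟨ha, hb⟩)
    · rcases eq_or_ne x v with rfl | hx
      · simpa [g] using hf.1 x
      · simp [g, hx]
    · rcases eq_or_ne x v with rfl | hx
      · simp [g]
      · simpa [g, hx] using hf.1 x
  have hweight : ∑ x, g x + f v = ∑ x, f x + 3 := by
    simp only [g, Finset.sum_update_of_mem (Finset.mem_univ v)]
    rw [← Finset.add_sum_erase _ _ (Finset.mem_univ v), Finset.sdiff_singleton_eq_erase]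
    ring
  have hsplit := sum_ite_mem_zero_add_sum {a, b} g
  rw [Finset.sum_pair hab, show g a = f a from Function.update_of_ne hva.symm ..,
    show g b = f b from Function.update_of_ne hvb.symm ..] at hsplit
  calc gammaDR G ≤ _ := gammaDR_le_sum hg
    _ < ∑ x, f x := by omega
    _ = _ := hsum

theorem bDR_eq_one_of_gammaDR_lt_deleteEdges {G : SimpleGraph V} {e : Sym2 V} (he : e ∈ G.edgeSet)
    (hlt : gammaDR G < gammaDR (G.deleteEdges {e})) : bDR G = 1 := by
  have hmem : 1 ∈ {k | ∃ B : Finset (Sym2 V), ↑B ⊆ G.edgeSet ∧ B.card = k ∧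
      gammaDR G < gammaDR (G.deleteEdges ↑B)} := ⟨{e}, by simpa using he, rfl, by simpa using hlt⟩
  refine le_antisymm (Nat.sInf_le hmem) ?_
  rw [Nat.one_le_iff_ne_zero, Ne, bDR, Nat.sInf_eq_zero, not_or]
  refine ⟨?_, Set.nonempty_iff_ne_empty.1 ⟨1, hmem⟩⟩
  rintro ⟨B, -, hB, hlt⟩
  rw [Finset.card_eq_zero.1 hB, Finset.coe_empty, SimpleGraph.deleteEdges_empty] at hlt
  exact hlt.false

end

theorem SimpleGraph.adj_iff_eq_of_degree_eq_one {V : Type*} {G : SimpleGraph V} {v w : V}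
    [Fintype (G.neighborSet w)] (hvw : G.Adj v w) (hw : G.degree w = 1) (x : V) :
    G.Adj w x ↔ x = v := by
  obtain ⟨y, -, hy⟩ := G.degree_eq_one_iff_existsUnique_adj.1 hw
  exact ⟨fun hx => (hy x hx).trans (hy v hvw.symm).symm, fun hx => hx ▸ hvw.symm⟩

theorem bDR_eq_one_of_support_general {V : Type*} [Fintype V]
    (G : SimpleGraph V) [DecidableRel G.Adj] (v u : V)
    (hdeg : 4 ≤ G.degree v)
    (hleaf : ∀ w, G.Adj v w → w ≠ u → G.degree w = 1) :
    bDR G = 1 := by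
  classical
  have hcard : 1 < ((G.neighborFinset v).erase u).card := by
    have := Finset.pred_card_le_card_erase (s := G.neighborFinset v) (a := u)
    rw [G.card_neighborFinset_eq_degree] at this
    omega
  obtain ⟨a, ha, b, hb, hab⟩ := Finset.one_lt_card.1 hcard
  simp only [Finset.mem_erase, SimpleGraph.mem_neighborFinset] at ha hb
  have hleaf' : ∀ w, G.Adj v w → w ≠ u → ∀ x, G.Adj w x ↔ x = v := fun w hvw hwu =>
    G.adj_iff_eq_of_degree_eq_one hvw (hleaf w hvw hwu)
  exact bDR_eq_one_of_gammaDR_lt_deleteEdges ha.2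
    (gammaDR_lt_gammaDR_deleteEdges_of_leaves hab (hleaf' a ha.2 ha.1) (hleaf' b hb.2 hb.1))

/-- If `G` has a vertex `v` of degree at least `4` all of whose neighbors
except exactly one are leaves (the remaining neighbor having degree at least
`2`), then `b_dR(G) = 1`. -/
theorem bDR_eq_one_of_support {V : Type*} [Fintype V]
    (G : SimpleGraph V) [DecidableRel G.Adj] (v u : V)
    (hdeg : 4 ≤ G.degree v) (hu : G.Adj v u) (hu2 : 2 ≤ G.degree u)
    (hleaf : ∀ w, G.Adj v w → w ≠ u → G.degree w = 1) :
    bDR G = 1 :=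
  bDR_eq_one_of_support_general G v u hdeg hleaf
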